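/- Palindromicity of the numerator of the left q-deformed rational (core of the Jones polynomial theorem): let n ≥ 1 and let a = (a₁, …, a₂ₙ) be a sequence of integers with aᵢ ≥ 1 for all i, and let ā := (a₂ₙ, …, a₁) be the reversed sequence. Working over the Laurent polynomial ring ℤ[q, q⁻¹], define P(a) ∈ ℤ[q, q⁻¹] to be the first entry of the vector β(a, q) · (1, 1−q)ᵀ, and let ι : ℤ[q, q⁻¹] → ℤ[q, q⁻¹] be the ring involution with ι(q) = q⁻¹. Then there exist an integer N and a sign ε ∈ {+1, −1} such that P(ā) = ε · q^N · ι(P(a)); that is, the coefficient sequence of P(ā) is, up to sign and an overall shift in degree, the reverse of the coefficient sequence of P(a). -/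
import Mathlib

set_option maxRecDepth 4000
set_option linter.unreachableTactic false
set_option linter.unusedTactic false


open Matrix LaurentPolynomial

/-- The q-deformed generator σ₁(q) = [[q⁻¹, −q⁻¹], [0, 1]] over ℤ[q, q⁻¹]. -/
noncomputable def sig1L : Matrix (Fin 2) (Fin 2) (LaurentPolynomial ℤ) :=
  !![T (-1), -T (-1); 0, 1]

/-- The q-deformed generator σ₂(q) = [[1, 0], [1, q⁻¹]] over ℤ[q, q⁻¹]. -/
noncomputable def sig2L : Matrix (Fin 2) (Fin 2) (LaurentPolynomial ℤ) :=
  !![1, 0; 1, T (-1)]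

/-- `betaL a k` is the product of the first `k` alternating factors
`σ₁(q)^{-a 1} · σ₂(q)^{a 2} · σ₁(q)^{-a 3} ⋯` over ℤ[q, q⁻¹] (indices start at 1). -/
noncomputable def betaL (a : ℕ → ℤ) : ℕ → Matrix (Fin 2) (Fin 2) (LaurentPolynomial ℤ)
  | 0 => 1
  | k + 1 => betaL a k *
      (if (k + 1) % 2 = 1 then sig1L ^ (-(a (k + 1))) else sig2L ^ (a (k + 1)))

/-- Explicit inverse of σ₁. -/
noncomputable def A1 : Matrix (Fin 2) (Fin 2) (LaurentPolynomial ℤ) :=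
  !![T 1, 1; 0, 1]

/-- The intertwining matrix. -/
noncomputable def Pm : Matrix (Fin 2) (Fin 2) (LaurentPolynomial ℤ) :=
  !![1, 1 - T 1; 1 - T (-1), 1]

/-- The involution q ↦ q⁻¹ applied entrywise to matrices, as a ring hom. -/
noncomputable def phiM : Matrix (Fin 2) (Fin 2) (LaurentPolynomial ℤ) →+*
    Matrix (Fin 2) (Fin 2) (LaurentPolynomial ℤ) :=
  ((LaurentPolynomial.invert (R := ℤ)).toRingEquiv.toRingHom).mapMatrix

lemma phiM_apply (M : Matrix (Fin 2) (Fin 2) (LaurentPolynomial ℤ)) (i j : Fin 2) :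
    phiM M i j = LaurentPolynomial.invert (M i j) := rfl

lemma hts : (T 1 : LaurentPolynomial ℤ) * T (-1) = 1 := by
  rw [← T_add]; norm_num

lemma sig2LT : sig2Lᵀ = !![1, 1; 0, T (-1)] := by
  rw [← Matrix.ext_iff]; intro i j; fin_cases i <;> fin_cases j <;> rfl

lemma A1T : A1ᵀ = !![T 1, 0; 1, 1] := by
  rw [← Matrix.ext_iff]; intro i j; fin_cases i <;> fin_cases j <;> rfl

lemma phiA1 : phiM A1 = !![T (-1), 1; 0, 1] := by
  rw [← Matrix.ext_iff]; intro i j; fin_cases i <;> fin_cases j <;>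
    simp [phiM_apply, A1]

lemma phiS2 : phiM sig2L = !![1, 0; 1, T 1] := by
  rw [← Matrix.ext_iff]; intro i j; fin_cases i <;> fin_cases j <;>
    simp [phiM_apply, sig2L]

lemma sig1L_mul_A1 : sig1L * A1 = 1 := by
  rw [sig1L, A1, Matrix.mul_fin_two, Matrix.one_fin_two, ← Matrix.ext_iff]
  intro i j
  fin_cases i <;> fin_cases j <;> simp only [Fin.zero_eta, Fin.mk_one, Matrix.of_apply, Matrix.cons_val', Matrix.cons_val_zero,
      Matrix.cons_val_one, Matrix.head_cons, Matrix.empty_val', Matrix.cons_val_fin_one,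
      Matrix.head_fin_const, mul_zero, mul_one, zero_mul, one_mul, add_zero, zero_add,
      neg_mul, sub_self] <;>
    first
      | ring1
      | linear_combination hts
      | linear_combination -hts
      | linear_combination (T 1 : LaurentPolynomial ℤ) * hts
      | linear_combination (-(T 1) : LaurentPolynomial ℤ) * hts
      | linear_combination (T (-1) : LaurentPolynomial ℤ) * hts
      | linear_combination (-(T (-1)) : LaurentPolynomial ℤ) * hts

lemma sig1L_inv : sig1L⁻¹ = A1 := Matrix.inv_eq_right_inv sig1L_mul_A1

lemma sig1L_zpow_neg (m : ℤ) (hm : 1 ≤ m) : sig1L ^ (-m) = A1 ^ m.toNat := by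
  obtain ⟨k, rfl⟩ : ∃ k : ℕ, m = (k : ℤ) := ⟨m.toNat, (Int.toNat_of_nonneg (by omega)).symm⟩
  rw [Matrix.zpow_neg_natCast, ← Matrix.inv_pow', sig1L_inv, Int.toNat_natCast]

lemma sig2L_zpow (m : ℤ) (hm : 1 ≤ m) : sig2L ^ m = sig2L ^ m.toNat := by
  obtain ⟨k, rfl⟩ : ∃ k : ℕ, m = (k : ℤ) := ⟨m.toNat, (Int.toNat_of_nonneg (by omega)).symm⟩
  rw [zpow_natCast, Int.toNat_natCast]

lemma step1 : phiM A1 * Pm = Pm * sig2Lᵀ := by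
  rw [phiA1, sig2LT, Pm, Matrix.mul_fin_two, Matrix.mul_fin_two, ← Matrix.ext_iff]
  intro i j
  fin_cases i <;> fin_cases j <;> simp only [Fin.zero_eta, Fin.mk_one, Matrix.of_apply, Matrix.cons_val', Matrix.cons_val_zero,
      Matrix.cons_val_one, Matrix.head_cons, Matrix.empty_val', Matrix.cons_val_fin_one,
      Matrix.head_fin_const, mul_zero, mul_one, zero_mul, one_mul, add_zero, zero_add,
      neg_mul, sub_self] <;>
    first
      | ring1
      | linear_combination hts
      | linear_combination -hts
      | linear_combination (T 1 : LaurentPolynomial ℤ) * hts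
      | linear_combination (-(T 1) : LaurentPolynomial ℤ) * hts
      | linear_combination (T (-1) : LaurentPolynomial ℤ) * hts
      | linear_combination (-(T (-1)) : LaurentPolynomial ℤ) * hts

lemma step2 : phiM sig2L * Pm = Pm * A1ᵀ := by
  rw [phiS2, A1T, Pm, Matrix.mul_fin_two, Matrix.mul_fin_two, ← Matrix.ext_iff]
  intro i j
  fin_cases i <;> fin_cases j <;> simp only [Fin.zero_eta, Fin.mk_one, Matrix.of_apply, Matrix.cons_val', Matrix.cons_val_zero,
      Matrix.cons_val_one, Matrix.head_cons, Matrix.empty_val', Matrix.cons_val_fin_one,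
      Matrix.head_fin_const, mul_zero, mul_one, zero_mul, one_mul, add_zero, zero_add,
      neg_mul, sub_self] <;>
    first
      | ring1
      | linear_combination hts
      | linear_combination -hts
      | linear_combination (T 1 : LaurentPolynomial ℤ) * hts
      | linear_combination (-(T 1) : LaurentPolynomial ℤ) * hts
      | linear_combination (T (-1) : LaurentPolynomial ℤ) * hts
      | linear_combination (-(T (-1)) : LaurentPolynomial ℤ) * hts

lemma g1 (j : ℕ) : phiM (A1 ^ j) * Pm = Pm * (sig2Lᵀ) ^ j := by
  induction j with
  | zero => simp
  | succ k ih =>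
    rw [pow_succ, _root_.map_mul, mul_assoc, step1, ← mul_assoc, ih, mul_assoc, ← pow_succ]

lemma g2 (j : ℕ) : phiM (sig2L ^ j) * Pm = Pm * (A1ᵀ) ^ j := by
  induction j with
  | zero => simp
  | succ k ih =>
    rw [pow_succ, _root_.map_mul, mul_assoc, step2, ← mul_assoc, ih, mul_assoc, ← pow_succ]

/-- `revL a k` : product of the paired factors for the reversed word, built on the left. -/
noncomputable def revL (a : ℕ → ℤ) : ℕ → Matrix (Fin 2) (Fin 2) (LaurentPolynomial ℤ)
  | 0 => 1
  | k + 1 => (if (k + 1) % 2 = 1 then sig2L ^ (a (k + 1)) else sig1L ^ (-(a (k + 1)))) * revL a k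

lemma comm_beta (a : ℕ → ℤ) (k : ℕ) (ha : ∀ i, 1 ≤ i → i ≤ k → 1 ≤ a i) :
    phiM (betaL a k) * Pm = Pm * (revL a k)ᵀ := by
  induction k with
  | zero => simp [betaL, revL]
  | succ k ih =>
    have ha' : ∀ i, 1 ≤ i → i ≤ k → 1 ≤ a i := fun i h1 h2 => ha i h1 (by omega)
    have hak : 1 ≤ a (k + 1) := ha (k + 1) (by omega) (by omega)
    rw [betaL, revL, transpose_mul, _root_.map_mul]
    by_cases hp : (k + 1) % 2 = 1
    · simp only [hp, if_pos]
      rw [sig1L_zpow_neg _ hak, sig2L_zpow _ hak, mul_assoc, g1, ← mul_assoc, ih ha',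
        mul_assoc, transpose_pow]
    · simp only [hp, if_neg, if_false]
      rw [sig2L_zpow _ hak, sig1L_zpow_neg _ hak, mul_assoc, g2, ← mul_assoc, ih ha',
        mul_assoc, transpose_pow]

lemma rev_split (a : ℕ → ℤ) (n : ℕ) :
    ∀ k, k ≤ 2 * n →
      betaL (fun i => a (2 * n + 1 - i)) (2 * n) =
        betaL (fun i => a (2 * n + 1 - i)) (2 * n - k) * revL a k := by
  intro k
  induction k with
  | zero => intro _; simp [revL]
  | succ k ih =>
    intro hk
    have hk' : k ≤ 2 * n := by omega
    have h1 : 2 * n - k = (2 * n - (k + 1)) + 1 := by omega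
    rw [ih hk', h1, betaL]
    have hidx : 2 * n + 1 - (2 * n - (k + 1) + 1) = k + 1 := by omega
    rw [revL, hidx]
    by_cases hp : (k + 1) % 2 = 1
    · rw [if_neg (by omega), if_pos hp, mul_assoc]
    · rw [if_pos (by omega), if_neg hp, mul_assoc]

/-- palindromicity of the numerator of the left q-deformed rational:
let a = (a₁, …, a₂ₙ) have all aᵢ ≥ 1 and let ā be the reversed sequence. Writing
P(a) for the first entry of β(a, q) · (1, 1−q)ᵀ over ℤ[q, q⁻¹] and ι for the ring
involution q ↦ q⁻¹, there are an integer N and a sign ε with P(ā) = ε · q^N · ι(P(a)). -/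
theorem flat_numerator_palindromic (n : ℕ) (hn : 1 ≤ n) (a : ℕ → ℤ)
    (ha : ∀ i, 1 ≤ i → i ≤ 2 * n → 1 ≤ a i) :
    ∃ (N : ℤ) (ε : ℤ), (ε = 1 ∨ ε = -1) ∧
      (betaL (fun i => a (2 * n + 1 - i)) (2 * n) *ᵥ ![1, 1 - T 1]) 0 =
        ε • (T N * LaurentPolynomial.invert ((betaL a (2 * n) *ᵥ ![1, 1 - T 1]) 0)) := by
  refine ⟨0, 1, Or.inl rfl, ?_⟩
  have hrev : betaL (fun i => a (2 * n + 1 - i)) (2 * n) = revL a (2 * n) := by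
    have := rev_split a n (2 * n) le_rfl
    simpa [betaL] using this
  have hcomm := comm_beta a (2 * n) ha
  have hentry := congrArg (fun M => M 0 0) hcomm
  simp only [Matrix.mul_apply, Fin.sum_univ_two, phiM_apply, Matrix.transpose_apply] at hentry
  rw [hrev]
  set M := betaL a (2 * n)
  set M' := revL a (2 * n)
  have hPm00 : Pm 0 0 = 1 := rfl
  have hPm01 : Pm 0 1 = 1 - T 1 := rfl
  have hPm10 : Pm 1 0 = 1 - T (-1) := rfl
  rw [hPm00, hPm01, hPm10] at hentry
  simp only [Matrix.mulVec, dotProduct, Fin.sum_univ_two, Matrix.cons_val_zero,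
    Matrix.cons_val_one, Matrix.head_cons, T_zero, one_smul, one_mul]
  simp only [map_add, _root_.map_mul, _root_.map_sub, _root_.map_one, invert_T, mul_one]
  linear_combination -hentry
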